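/- Let $(S,\Sigma)$ be a measurable space, $\{\mu^{(n)}\}$ finite measures converging in total variation to $\mu$, and $\tilde{\mu}, \tilde{\mu}^{(n)}$ finite signed measures with $\tilde{\mu} \ll \mu$ and $\tilde{\mu}^{(n)} \ll \mu^{(n)}$. Then $\sup_{A\in\Sigma}|\tilde{\mu}^{(n)}(A) - \tilde{\mu}(A)| \to 0$ if and only if: (i) $\frac{d\tilde{\mu}^{(n)}}{d\mu^{(n)}} \to \frac{d\tilde{\mu}}{d\mu}$ in measure $\mu$; and (ii) $\lim_{K\to+\infty}\sup_{n\ge1}|\tilde{\mu}^{(n)}|(\{s: |\frac{d\tilde{\mu}^{(n)}}{d\mu^{(n)}}(s)| \ge K\}) = 0$, where $|\tilde{\mu}^{(n)}|$ denotes the total variation measure of $\tilde{\mu}^{(n)}$. -/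

import Mathlib

/-!
Write `fₙ`, `f` for the densities, so that `τₙ A - τ A = ∫_A fₙ dμₙ - ∫_A f dμ`. For a function
bounded by `K`, the integrals against `μₙ` and against `μ` differ by at most
`2K supₐ |μₙ A - μ A|` (split along a Hahn decomposition of `μₙ - μ`). Truncating at level `K`
therefore bounds the uniform distance by the tails of `fₙ` and `f` beyond `K`, a total variation
term, and the `L¹(μ)` distance of the truncations, which tends to zero by Vitali's theorem when
`fₙ → f` in measure.

Conversely, integrating over `{ε ≤ fₙ - f, |f| ≤ K}` (and its mirror image) gives convergence
in measure. Splitting `B` according to the sign of `fₙ` gives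
`∫_B |fₙ| dμₙ ≤ ∫_B |f| dμ + 2 supₐ |τₙ A - τ A|`; since `{K ≤ |fₙ|}` has small `μ`-measure
jointly in `n` and `K`, absolute continuity of `∫ |f| dμ` makes the tails small for all large
`n`, and each of the finitely many remaining tails vanishes on its own.
-/

open MeasureTheory Filter Topology Set
open scoped ENNReal NNReal

namespace TVConvergence

theorem tendsto_zero_of_le_add {ι κ : Type*} {l : Filter ι} {l' : Filter κ} [l'.NeBot]
    {a : ι → ℝ} {b : ι → κ → ℝ} {c : κ → ℝ} (ha : ∀ i, 0 ≤ a i)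
    (hb : ∀ᶠ k in l', Tendsto (b · k) l (𝓝 0)) (hc : Tendsto c l' (𝓝 0))
    (h : ∀ᶠ k in l', ∀ i, a i ≤ b i k + c k) : Tendsto a l (𝓝 0) := by
  refine tendsto_order.2 ⟨fun x hx => .of_forall fun i => hx.trans_le (ha i), fun y hy => ?_⟩
  obtain ⟨k, ⟨hbk, hk⟩, hck⟩ :=
    ((hb.and h).and (hc.eventually (gt_mem_nhds (half_pos hy)))).exists
  filter_upwards [hbk.eventually (gt_mem_nhds (half_pos hy))] with i hi
  linarith [hk i]

theorem tendsto_iSup_of_tendsto_prod {β : Type*} {l : Filter β} {F : ℕ → β → ℝ≥0∞}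
    (h : Tendsto (Function.uncurry F) (atTop ×ˢ l) (𝓝 0))
    (hF : ∀ n, Tendsto (F n) l (𝓝 0)) : Tendsto (fun b => ⨆ n, F n b) l (𝓝 0) := by
  rw [ENNReal.tendsto_nhds_zero] at h ⊢
  intro ε hε
  obtain ⟨pa, hpa, pb, hpb, hp⟩ := eventually_prod_iff.1 (h ε hε)
  obtain ⟨N, hN⟩ := eventually_atTop.1 hpa
  have hfirst : ∀ᶠ b in l, ∀ n ∈ Finset.range N, F n b ≤ ε :=
    (eventually_all_finset _).2 fun n _ => ENNReal.tendsto_nhds_zero.1 (hF n) ε hε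
  filter_upwards [hpb, hfirst] with b hb hbN
  refine iSup_le fun n => ?_
  rcases lt_or_ge n N with hn | hn
  exacts [hbN n (Finset.mem_range.2 hn), hp (hN n hn) hb]

noncomputable def clamp (K a : ℝ) : ℝ := max (-K) (min a K)

@[fun_prop]
theorem continuous_clamp (K : ℝ) : Continuous (clamp K) := by
  unfold clamp; fun_prop

theorem abs_clamp_le {K : ℝ} (hK : 0 ≤ K) (a : ℝ) : |clamp K a| ≤ K :=
  abs_le.2 ⟨le_max_left _ _, max_le (by linarith) (min_le_right _ _)⟩

theorem clamp_of_abs_le {K a : ℝ} (h : |a| ≤ K) : clamp K a = a := by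
  rw [clamp, min_eq_left (abs_le.1 h).2, max_eq_right (abs_le.1 h).1]

theorem abs_clamp_sub_clamp_le (K a b : ℝ) : |clamp K a - clamp K b| ≤ |a - b| := by
  simp only [clamp, max_comm (-K)]
  refine (abs_max_sub_max_le_abs _ _ _).trans ?_
  simpa using abs_min_sub_min_le_max a K b K

theorem abs_sub_clamp_le {K : ℝ} (hK : 0 ≤ K) (a : ℝ) : |a - clamp K a| ≤ |a| := by
  unfold clamp
  rw [abs_le]
  constructor <;> cases max_cases (-K) (min a K) <;> cases min_cases a K <;>
    cases abs_cases a <;> linarith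

variable {S : Type*} [MeasurableSpace S]

noncomputable def tvDist (ν₁ ν₂ : Measure S) : ℝ≥0∞ :=
  ⨆ (A : Set S) (_ : MeasurableSet A), (ν₁ A - ν₂ A) + (ν₂ A - ν₁ A)

theorem tvDist_comm (ν₁ ν₂ : Measure S) : tvDist ν₁ ν₂ = tvDist ν₂ ν₁ := by
  simp only [tvDist, add_comm]

theorem tsub_le_tvDist {ν₁ ν₂ : Measure S} {A : Set S} (hA : MeasurableSet A) :
    ν₁ A - ν₂ A ≤ tvDist ν₁ ν₂ :=
  le_iSup₂_of_le A hA le_self_add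

theorem measure_le_add_tvDist {ν₁ ν₂ : Measure S} {A : Set S} (hA : MeasurableSet A) :
    ν₂ A ≤ ν₁ A + tvDist ν₁ ν₂ :=
  tsub_le_iff_left.1 (tvDist_comm ν₁ ν₂ ▸ tsub_le_tvDist hA)

theorem tvDist_ne_top (ν₁ ν₂ : Measure S) [IsFiniteMeasure ν₁] [IsFiniteMeasure ν₂] :
    tvDist ν₁ ν₂ ≠ ⊤ := by
  refine ne_top_of_le_ne_top (b := ν₁ univ + ν₂ univ) (by finiteness) (iSup₂_le fun A _ => ?_)
  exact add_le_add (tsub_le_self.trans (measure_mono (subset_univ A)))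
    (tsub_le_self.trans (measure_mono (subset_univ A)))

theorem measureReal_le_add_tvDist {ν₁ ν₂ : Measure S} [IsFiniteMeasure ν₁] [IsFiniteMeasure ν₂]
    {A : Set S} (hA : MeasurableSet A) : ν₂.real A ≤ ν₁.real A + (tvDist ν₁ ν₂).toReal := by
  rw [measureReal_def, measureReal_def, ← ENNReal.toReal_add (by finiteness) (tvDist_ne_top _ _)]
  exact ENNReal.toReal_mono (by finiteness [tvDist_ne_top ν₁ ν₂]) (measure_le_add_tvDist hA)

theorem isFiniteMeasure_of_tvDist_ne_top {ν₁ ν₂ : Measure S} [IsFiniteMeasure ν₁]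
    (h : tvDist ν₁ ν₂ ≠ ⊤) : IsFiniteMeasure ν₂ :=
  ⟨(measure_le_add_tvDist MeasurableSet.univ).trans_lt (by finiteness)⟩

theorem isFiniteMeasure_of_tendsto_tvDist {μs : ℕ → Measure S} {μ : Measure S}
    [∀ n, IsFiniteMeasure (μs n)]
    (htv : Tendsto (fun n => tvDist (μs n) μ) atTop (𝓝 0)) : IsFiniteMeasure μ := by
  obtain ⟨n, hn⟩ := (htv.eventually (gt_mem_nhds zero_lt_one)).exists
  exact isFiniteMeasure_of_tvDist_ne_top (ne_top_of_lt (hn.trans ENNReal.one_lt_top))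

theorem abs_integral_sub_integral_le_of_le {ν ν' : Measure S} [IsFiniteMeasure ν']
    (hle : ν ≤ ν') {g : S → ℝ} (hg : AEStronglyMeasurable g ν') {K : ℝ}
    (hK : ∀ x, |g x| ≤ K) :
    |∫ x, g x ∂ν' - ∫ x, g x ∂ν| ≤ K * (ν' univ - ν univ).toReal := by
  have : IsFiniteMeasure ν := isFiniteMeasure_of_le ν' hle
  have hgi : ∀ ρ : Measure S, ρ ≤ ν' → Integrable g ρ := fun ρ hρ =>
    have : IsFiniteMeasure ρ := isFiniteMeasure_of_le ν' hρ
    .of_bound (hg.mono_measure hρ) K (ae_of_all _ fun x => by simpa using hK x)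
  conv_lhs => rw [← Measure.sub_add_cancel_of_le hle]
  rw [integral_add_measure (hgi _ Measure.sub_le) (hgi _ hle), add_sub_cancel_right,
    ← Measure.sub_apply MeasurableSet.univ hle]
  exact norm_integral_le_of_norm_le_const (f := g) (ae_of_all _ fun x => by simpa using hK x)

theorem abs_integral_sub_integral_le_tvDist (ν₁ ν₂ : Measure S) [IsFiniteMeasure ν₁]
    [IsFiniteMeasure ν₂] {g : S → ℝ} (hg : Measurable g) {K : ℝ} (hK0 : 0 ≤ K)
    (hK : ∀ x, |g x| ≤ K) :
    |∫ x, g x ∂ν₁ - ∫ x, g x ∂ν₂| ≤ 2 * K * (tvDist ν₁ ν₂).toReal := by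
  obtain ⟨s, hs⟩ := exists_isHahnDecomposition ν₁ ν₂
  have hgi : ∀ ν : Measure S, [IsFiniteMeasure ν] → Integrable g ν := fun ν _ =>
    .of_bound hg.aestronglyMeasurable K (ae_of_all _ fun x => by simpa using hK x)
  have hon : |∫ x in s, g x ∂ν₁ - ∫ x in s, g x ∂ν₂| ≤ K * (tvDist ν₁ ν₂).toReal := by
    rw [abs_sub_comm]
    refine (abs_integral_sub_integral_le_of_le hs.le_on hg.aestronglyMeasurable hK).trans ?_
    rw [Measure.restrict_apply_univ, Measure.restrict_apply_univ, tvDist_comm]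
    gcongr
    exacts [tvDist_ne_top _ _, tsub_le_tvDist hs.measurableSet]
  have hoff : |∫ x in sᶜ, g x ∂ν₁ - ∫ x in sᶜ, g x ∂ν₂| ≤ K * (tvDist ν₁ ν₂).toReal := by
    refine (abs_integral_sub_integral_le_of_le hs.ge_on_compl hg.aestronglyMeasurable hK).trans ?_
    rw [Measure.restrict_apply_univ, Measure.restrict_apply_univ]
    gcongr
    exacts [tvDist_ne_top _ _, tsub_le_tvDist hs.measurableSet.compl]
  rw [← integral_add_compl hs.measurableSet (hgi ν₁),
    ← integral_add_compl hs.measurableSet (hgi ν₂), add_sub_add_comm]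
  linarith [abs_add_le (∫ x in s, g x ∂ν₁ - ∫ x in s, g x ∂ν₂)
    (∫ x in sᶜ, g x ∂ν₁ - ∫ x in sᶜ, g x ∂ν₂)]

theorem tendsto_measure_setOf_le_abs (ν : Measure S) [IsFiniteMeasure ν] {g : S → ℝ}
    (hg : Measurable g) : Tendsto (fun K : ℝ => ν {x | K ≤ |g x|}) atTop (𝓝 0) := by
  have hempty : (⋂ K : ℝ, {x | K ≤ |g x|}) = ∅ :=
    eq_empty_of_forall_notMem fun x hx => by
      have h : |g x| + 1 ≤ |g x| := mem_iInter.1 hx (|g x| + 1)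
      linarith
  simpa [hempty, Function.comp_def] using tendsto_measure_iInter_atTop (μ := ν)
    (fun K => (measurableSet_le measurable_const hg.abs).nullMeasurableSet)
    (fun K K' hKK' x (hx : K' ≤ |g x|) => hKK'.trans hx) ⟨0, measure_ne_top _ _⟩

variable {ν : Measure S}

theorem tendsto_setLIntegral_setOf_le_abs {g : S → ℝ} (hg : Measurable g)
    (hgi : Integrable g ν) :
    Tendsto (fun K : ℝ => ∫⁻ x in {x | K ≤ |g x|}, ‖g x‖ₑ ∂ν) atTop (𝓝 0) := by
  have : IsFiniteMeasure (ν.withDensity fun x => ‖g x‖ₑ) :=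
    isFiniteMeasure_withDensity hgi.2.ne
  refine (tendsto_measure_setOf_le_abs (ν.withDensity fun x => ‖g x‖ₑ) hg).congr fun K => ?_
  exact withDensity_apply _ (measurableSet_le measurable_const hg.abs)

theorem integral_abs_sub_clamp_le {g : S → ℝ} (hg : Measurable g) (hgi : Integrable g ν)
    {K : ℝ} (hK : 0 ≤ K) :
    ∫ x, |g x - clamp K (g x)| ∂ν ≤ (∫⁻ x in {x | K ≤ |g x|}, ‖g x‖ₑ ∂ν).toReal := by
  have hT : MeasurableSet {x | K ≤ |g x|} := measurableSet_le measurable_const hg.abs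
  calc ∫ x, |g x - clamp K (g x)| ∂ν
      ≤ ∫ x, {x | K ≤ |g x|}.indicator (fun x => |g x|) x ∂ν := by
        refine integral_mono_of_nonneg (.of_forall fun _ => abs_nonneg _)
          (hgi.abs.indicator hT) (.of_forall fun x => ?_)
        dsimp only
        rw [indicator_apply]
        split_ifs with hx
        · exact abs_sub_clamp_le hK _
        · rw [clamp_of_abs_le (not_le.1 hx).le, sub_self, abs_zero]
    _ = (∫⁻ x in {x | K ≤ |g x|}, ‖g x‖ₑ ∂ν).toReal := by
        rw [integral_indicator hT]
        exact integral_norm_eq_lintegral_enorm hg.aestronglyMeasurable.restrict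

theorem tendstoInMeasure_clamp {gs : ℕ → S → ℝ} {g : S → ℝ}
    (h : TendstoInMeasure ν gs atTop g) (K : ℝ) :
    TendstoInMeasure ν (fun n x => clamp K (gs n x)) atTop (fun x => clamp K (g x)) := by
  rw [tendstoInMeasure_iff_dist] at h ⊢
  refine fun ε hε => tendsto_of_tendsto_of_tendsto_of_le_of_le tendsto_const_nhds (h ε hε)
    (fun _ => zero_le) (fun n => measure_mono fun x (hx : ε ≤ dist _ _) => ?_)
  simp only [Real.dist_eq] at hx ⊢
  exact hx.trans (abs_clamp_sub_clamp_le K _ _)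

theorem unifIntegrable_of_abs_le {gs : ℕ → S → ℝ} (hgs : ∀ n, Measurable (gs n)) {K : ℝ}
    (hK : ∀ n x, |gs n x| ≤ K) : UnifIntegrable gs 1 ν := by
  refine unifIntegrable_of le_rfl ENNReal.one_ne_top (fun n => (hgs n).aestronglyMeasurable)
    fun ε _ => ⟨K.toNNReal + 1, fun n => ?_⟩
  have hempty : {x | K.toNNReal + 1 ≤ ‖gs n x‖₊} = ∅ :=
    eq_empty_of_forall_notMem fun x hx => by
      have h : ((K.toNNReal + 1 : ℝ≥0) : ℝ) ≤ ‖gs n x‖₊ := NNReal.coe_le_coe.2 hx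
      simp only [NNReal.coe_add, Real.coe_toNNReal', NNReal.coe_one, coe_nnnorm,
        Real.norm_eq_abs] at h
      linarith [le_max_left K 0, hK n x]
  simp [hempty]

theorem tendsto_integral_abs_clamp_sub_clamp [IsFiniteMeasure ν] {gs : ℕ → S → ℝ} {g : S → ℝ}
    (hgs : ∀ n, Measurable (gs n)) (hg : Measurable g) (h : TendstoInMeasure ν gs atTop g)
    {K : ℝ} (hK : 0 ≤ K) :
    Tendsto (fun n => ∫ x, |clamp K (gs n x) - clamp K (g x)| ∂ν) atTop (𝓝 0) := by
  have hL1 := tendsto_Lp_finite_of_tendstoInMeasure le_rfl ENNReal.one_ne_top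
    (fun n => ((continuous_clamp K).measurable.comp (hgs n)).aestronglyMeasurable)
    (memLp_top_of_bound ((continuous_clamp K).measurable.comp hg).aestronglyMeasurable K
      (.of_forall fun x => abs_clamp_le hK _) |>.mono_exponent le_top)
    (unifIntegrable_of_abs_le (fun n => (continuous_clamp K).measurable.comp (hgs n))
      fun n x => abs_clamp_le hK _)
    (tendstoInMeasure_clamp h K)
  simp only [eLpNorm_one_eq_lintegral_enorm] at hL1
  refine ((ENNReal.tendsto_toReal ENNReal.zero_ne_top).comp hL1).congr fun n => ?_
  exact (integral_norm_eq_lintegral_enorm (by fun_prop)).symm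

variable {ν₁ ν₂ : Measure S} {g₁ g₂ : S → ℝ}

theorem abs_setIntegral_sub_setIntegral_le {g h : S → ℝ} (hg : Integrable g ν)
    (hh : Integrable h ν) (A : Set S) :
    |∫ x in A, g x ∂ν - ∫ x in A, h x ∂ν| ≤ ∫ x, |g x - h x| ∂ν := by
  rw [← integral_sub hg.integrableOn hh.integrableOn]
  exact (norm_integral_le_integral_norm fun x => g x - h x).trans
    (setIntegral_le_integral (hg.sub hh).norm (.of_forall fun _ => norm_nonneg _))

theorem abs_setIntegral_sub_setIntegral_le_tvDist (ν₁ ν₂ : Measure S) [IsFiniteMeasure ν₁]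
    [IsFiniteMeasure ν₂] {g : S → ℝ} (hg : Measurable g) {A : Set S} (hA : MeasurableSet A)
    {K : ℝ} (hK0 : 0 ≤ K) (hK : ∀ x ∈ A, |g x| ≤ K) :
    |∫ x in A, g x ∂ν₁ - ∫ x in A, g x ∂ν₂| ≤ 2 * K * (tvDist ν₁ ν₂).toReal := by
  rw [← integral_indicator hA, ← integral_indicator hA]
  refine abs_integral_sub_integral_le_tvDist ν₁ ν₂ (hg.indicator hA) hK0 fun x => ?_
  by_cases hx : x ∈ A
  · rw [indicator_of_mem hx]
    exact hK x hx
  · rw [indicator_of_notMem hx]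
    simpa using hK0

noncomputable def setIntegralDist (ν₁ : Measure S) (g₁ : S → ℝ) (ν₂ : Measure S) (g₂ : S → ℝ) :
    ℝ :=
  ⨆ (A : Set S) (_ : MeasurableSet A), |∫ x in A, g₁ x ∂ν₁ - ∫ x in A, g₂ x ∂ν₂|

theorem abs_sub_le_setIntegralDist (hg₁ : Integrable g₁ ν₁) (hg₂ : Integrable g₂ ν₂) {A : Set S}
    (hA : MeasurableSet A) :
    |∫ x in A, g₁ x ∂ν₁ - ∫ x in A, g₂ x ∂ν₂| ≤ setIntegralDist ν₁ g₁ ν₂ g₂ := by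
  refine le_ciSup₂ (f := fun B (_ : MeasurableSet B) => |∫ x in B, g₁ x ∂ν₁ - ∫ x in B, g₂ x ∂ν₂|)
    ⟨∫ x, |g₁ x| ∂ν₁ + ∫ x, |g₂ x| ∂ν₂, ?_⟩ A hA
  simp only [mem_upperBounds, mem_iUnion, mem_range]
  rintro _ ⟨B, -, rfl⟩
  exact (abs_sub _ _).trans (add_le_add
    ((norm_integral_le_integral_norm g₁).trans
      (setIntegral_le_integral hg₁.norm (.of_forall fun _ => norm_nonneg _)))
    ((norm_integral_le_integral_norm g₂).trans
      (setIntegral_le_integral hg₂.norm (.of_forall fun _ => norm_nonneg _))))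

theorem setIntegralDist_le {b : ℝ} (hb : 0 ≤ b)
    (h : ∀ A, MeasurableSet A → |∫ x in A, g₁ x ∂ν₁ - ∫ x in A, g₂ x ∂ν₂| ≤ b) :
    setIntegralDist ν₁ g₁ ν₂ g₂ ≤ b :=
  Real.iSup_le (fun A => Real.iSup_le (h A) hb) hb

theorem setIntegralDist_nonneg : 0 ≤ setIntegralDist ν₁ g₁ ν₂ g₂ :=
  Real.iSup_nonneg fun _ => Real.iSup_nonneg fun _ => abs_nonneg _

theorem mul_measureReal_le_of_setIntegral_sub_le [IsFiniteMeasure ν₁] [IsFiniteMeasure ν₂]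
    (hg₁ : Integrable g₁ ν₁) (hg₂ : Measurable g₂) {B : Set S} (hB : MeasurableSet B)
    {K ε t : ℝ} (hK0 : 0 ≤ K) (hK : ∀ x ∈ B, |g₂ x| ≤ K) (hε : ∀ x ∈ B, g₂ x + ε ≤ g₁ x)
    (ht : ∫ x in B, g₁ x ∂ν₁ - ∫ x in B, g₂ x ∂ν₂ ≤ t) :
    ε * ν₁.real B ≤ t + 2 * K * (tvDist ν₁ ν₂).toReal := by
  have htv := abs_setIntegral_sub_setIntegral_le_tvDist ν₁ ν₂ hg₂ hB hK0 hK
  have hg₂i : IntegrableOn g₂ B ν₁ :=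
    Integrable.of_bound hg₂.aestronglyMeasurable K
      ((ae_restrict_iff' hB).2 (.of_forall fun x hx => by simpa using hK x hx))
  have hmono : ∫ x in B, (g₂ x + ε) ∂ν₁ ≤ ∫ x in B, g₁ x ∂ν₁ :=
    setIntegral_mono_on (hg₂i.add (integrableOn_const (by finiteness))) hg₁.integrableOn hB hε
  rw [integral_add hg₂i (integrableOn_const (by finiteness)), setIntegral_const, smul_eq_mul]
    at hmono
  linarith [abs_le.1 htv]

theorem mul_measureReal_le_of_abs_setIntegral_sub_le [IsFiniteMeasure ν₁] [IsFiniteMeasure ν₂]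
    (hg₁ : Measurable g₁) (hg₁i : Integrable g₁ ν₁) (hg₂ : Measurable g₂) {K ε t : ℝ}
    (hK0 : 0 ≤ K) (hε : 0 ≤ ε)
    (ht : ∀ A, MeasurableSet A → |∫ x in A, g₁ x ∂ν₁ - ∫ x in A, g₂ x ∂ν₂| ≤ t) :
    ε * ν₁.real {x | ε ≤ |g₁ x - g₂ x| ∧ |g₂ x| ≤ K} ≤ 2 * (t + 2 * K * (tvDist ν₁ ν₂).toReal) := by
  have hbdd : MeasurableSet {x | |g₂ x| ≤ K} := measurableSet_le hg₂.abs measurable_const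
  have hup : MeasurableSet {x | ε ≤ g₁ x - g₂ x ∧ |g₂ x| ≤ K} :=
    (measurableSet_le measurable_const (hg₁.sub hg₂)).inter hbdd
  have hdown : MeasurableSet {x | ε ≤ g₂ x - g₁ x ∧ |g₂ x| ≤ K} :=
    (measurableSet_le measurable_const (hg₂.sub hg₁)).inter hbdd
  have hup_le : ε * ν₁.real {x | ε ≤ g₁ x - g₂ x ∧ |g₂ x| ≤ K} ≤
      t + 2 * K * (tvDist ν₁ ν₂).toReal :=
    mul_measureReal_le_of_setIntegral_sub_le hg₁i hg₂ hup hK0 (fun x hx => hx.2)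
      (fun x hx => by linarith [hx.1]) (abs_le.1 (ht _ hup)).2
  have hdown_le : ε * ν₁.real {x | ε ≤ g₂ x - g₁ x ∧ |g₂ x| ≤ K} ≤
      t + 2 * K * (tvDist ν₁ ν₂).toReal := by
    refine mul_measureReal_le_of_setIntegral_sub_le (g₁ := fun x => -g₁ x) (g₂ := fun x => -g₂ x)
      hg₁i.neg hg₂.neg hdown hK0 (fun x hx => by simpa using hx.2)
      (fun x hx => by linarith [hx.1]) ?_
    rw [integral_neg, integral_neg]
    linarith [(abs_le.1 (ht _ hdown)).1]
  have hsplit : {x | ε ≤ |g₁ x - g₂ x| ∧ |g₂ x| ≤ K} ⊆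
      {x | ε ≤ g₁ x - g₂ x ∧ |g₂ x| ≤ K} ∪ {x | ε ≤ g₂ x - g₁ x ∧ |g₂ x| ≤ K} := by
    rintro x ⟨hx, hxK⟩
    rcases le_abs'.1 hx with h | h
    exacts [Or.inr ⟨by linarith, hxK⟩, Or.inl ⟨h, hxK⟩]
  calc ε * ν₁.real {x | ε ≤ |g₁ x - g₂ x| ∧ |g₂ x| ≤ K}
      ≤ ε * (ν₁.real {x | ε ≤ g₁ x - g₂ x ∧ |g₂ x| ≤ K} +
          ν₁.real {x | ε ≤ g₂ x - g₁ x ∧ |g₂ x| ≤ K}) := by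
        gcongr
        exact (measureReal_mono hsplit).trans (measureReal_union_le _ _)
    _ ≤ _ := by linarith

theorem setLIntegral_enorm_le_add (hg₁ : Measurable g₁) (hg₁i : Integrable g₁ ν₁)
    (hg₂i : Integrable g₂ ν₂) {t : ℝ}
    (ht : ∀ A, MeasurableSet A → |∫ x in A, g₁ x ∂ν₁ - ∫ x in A, g₂ x ∂ν₂| ≤ t)
    {B : Set S} (hB : MeasurableSet B) :
    ∫⁻ x in B, ‖g₁ x‖ₑ ∂ν₁ ≤ ∫⁻ x in B, ‖g₂ x‖ₑ ∂ν₂ + ENNReal.ofReal (2 * t) := by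
  have hP : MeasurableSet {x | 0 ≤ g₁ x} := measurableSet_le measurable_const hg₁
  have hpos := abs_le.1 (ht _ (hB.inter hP))
  have hneg := abs_le.1 (ht _ (hB.diff hP))
  have h₁ : ∫ x in B, |g₁ x| ∂ν₁ =
      ∫ x in B ∩ {x | 0 ≤ g₁ x}, g₁ x ∂ν₁ - ∫ x in B \ {x | 0 ≤ g₁ x}, g₁ x ∂ν₁ := by
    rw [← integral_inter_add_sdiff hP hg₁i.abs.integrableOn,
      setIntegral_congr_fun (hB.inter hP) fun x hx => abs_of_nonneg hx.2,
      setIntegral_congr_fun (hB.diff hP) fun x hx => abs_of_neg (not_le.1 hx.2), integral_neg]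
    ring
  have h₂ : ∫ x in B ∩ {x | 0 ≤ g₁ x}, g₂ x ∂ν₂ ≤ ∫ x in B ∩ {x | 0 ≤ g₁ x}, |g₂ x| ∂ν₂ :=
    integral_mono hg₂i.integrableOn hg₂i.abs.integrableOn fun x => le_abs_self _
  have h₃ : -∫ x in B \ {x | 0 ≤ g₁ x}, g₂ x ∂ν₂ ≤ ∫ x in B \ {x | 0 ≤ g₁ x}, |g₂ x| ∂ν₂ := by
    rw [← integral_neg]
    exact integral_mono hg₂i.neg.integrableOn hg₂i.abs.integrableOn fun x => neg_le_abs _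
  have h₄ := integral_inter_add_sdiff hP hg₂i.abs.integrableOn (s := B)
  rw [← ofReal_integral_norm_eq_lintegral_enorm hg₁i.integrableOn,
    ← ofReal_integral_norm_eq_lintegral_enorm hg₂i.integrableOn]
  refine (ENNReal.ofReal_le_ofReal ?_).trans ENNReal.ofReal_add_le
  simp only [Real.norm_eq_abs]
  linarith

theorem abs_setIntegral_sub_le_of_clamp [IsFiniteMeasure ν₁] [IsFiniteMeasure ν₂]
    (hg₁ : Measurable g₁) (hg₁i : Integrable g₁ ν₁) (hg₂ : Measurable g₂)
    (hg₂i : Integrable g₂ ν₂) {K : ℝ} (hK : 0 ≤ K) {A : Set S} (hA : MeasurableSet A) :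
    |∫ x in A, g₁ x ∂ν₁ - ∫ x in A, g₂ x ∂ν₂| ≤
      ∫ x, |g₁ x - clamp K (g₁ x)| ∂ν₁ + 2 * K * (tvDist ν₁ ν₂).toReal +
        ∫ x, |clamp K (g₁ x) - clamp K (g₂ x)| ∂ν₂ + ∫ x, |g₂ x - clamp K (g₂ x)| ∂ν₂ := by
  have hclamp : ∀ ν : Measure S, [IsFiniteMeasure ν] → ∀ g : S → ℝ, Measurable g →
      Integrable (fun x => clamp K (g x)) ν := fun ν _ g hg =>
    .of_bound (by fun_prop) K (.of_forall fun x => by simpa using abs_clamp_le hK (g x))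
  have e₁ := abs_setIntegral_sub_setIntegral_le hg₁i (hclamp ν₁ g₁ hg₁) A
  have e₂ := abs_setIntegral_sub_setIntegral_le_tvDist ν₁ ν₂
    ((continuous_clamp K).measurable.comp hg₁) hA hK fun x _ => abs_clamp_le hK (g₁ x)
  have e₃ := abs_setIntegral_sub_setIntegral_le (hclamp ν₂ g₁ hg₁) (hclamp ν₂ g₂ hg₂) A
  have e₄ := abs_setIntegral_sub_setIntegral_le hg₂i (hclamp ν₂ g₂ hg₂) A
  rw [abs_sub_comm] at e₄
  simp only [Function.comp_apply] at e₂
  linarith [abs_sub_le (∫ x in A, g₁ x ∂ν₁) (∫ x in A, clamp K (g₁ x) ∂ν₁) (∫ x in A, g₂ x ∂ν₂),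
    abs_sub_le (∫ x in A, clamp K (g₁ x) ∂ν₁) (∫ x in A, clamp K (g₁ x) ∂ν₂) (∫ x in A, g₂ x ∂ν₂),
    abs_sub_le (∫ x in A, clamp K (g₁ x) ∂ν₂) (∫ x in A, clamp K (g₂ x) ∂ν₂) (∫ x in A, g₂ x ∂ν₂)]

section Convergence

variable {μs : ℕ → Measure S} {μ : Measure S} {fs : ℕ → S → ℝ} {f : S → ℝ}

theorem tendstoInMeasure_of_tendsto_setIntegralDist [∀ n, IsFiniteMeasure (μs n)]
    [IsFiniteMeasure μ] (hfs : ∀ n, Measurable (fs n))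
    (hfsi : ∀ n, Integrable (fs n) (μs n)) (hf : Measurable f) (hfi : Integrable f μ)
    (htv : Tendsto (fun n => tvDist (μs n) μ) atTop (𝓝 0))
    (hT : Tendsto (fun n => setIntegralDist (μs n) (fs n) μ f) atTop (𝓝 0)) :
    TendstoInMeasure μ fs atTop f := by
  rw [tendstoInMeasure_iff_measureReal_dist]
  intro ε hε
  set T := fun n => setIntegralDist (μs n) (fs n) μ f
  set d := fun n => (tvDist (μs n) μ).toReal
  have hd : Tendsto d atTop (𝓝 0) :=
    (ENNReal.tendsto_toReal_zero_iff fun n => tvDist_ne_top _ _).2 htv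
  have hb (K : ℝ) : Tendsto (fun n => 2 * (T n + 2 * K * d n) / ε + d n) atTop (𝓝 0) := by
    simpa using ((hT.add (hd.const_mul (2 * K))).const_mul 2).div_const ε |>.add hd
  have hc : Tendsto (fun K : ℝ => μ.real {x | K ≤ |f x|}) atTop (𝓝 0) :=
    (ENNReal.tendsto_toReal_zero_iff fun _ => measure_ne_top _ _).2
      (tendsto_measure_setOf_le_abs μ hf)
  refine tendsto_zero_of_le_add (fun n => measureReal_nonneg) (.of_forall hb) hc
    ((eventually_ge_atTop 0).mono fun K hK n => ?_)
  have hE : MeasurableSet {x | ε ≤ |fs n x - f x| ∧ |f x| ≤ K} :=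
    (measurableSet_le measurable_const ((hfs n).sub hf).abs).inter
      (measurableSet_le hf.abs measurable_const)
  have hμs := mul_measureReal_le_of_abs_setIntegral_sub_le (hfs n) (hfsi n) hf hK hε.le
    fun A hA => abs_sub_le_setIntegralDist (hfsi n) hfi hA
  have hμ := measureReal_le_add_tvDist (ν₁ := μs n) (ν₂ := μ) hE
  have hsplit : μ.real {x | ε ≤ dist (fs n x) (f x)} ≤
      μ.real {x | ε ≤ |fs n x - f x| ∧ |f x| ≤ K} + μ.real {x | K ≤ |f x|} := by
    refine (measureReal_mono fun x (hx : ε ≤ dist _ _) => ?_).trans (measureReal_union_le _ _)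
    rw [Real.dist_eq] at hx
    by_cases hxK : |f x| ≤ K
    exacts [Or.inl ⟨hx, hxK⟩, Or.inr (not_le.1 hxK).le]
  have : (μs n).real {x | ε ≤ |fs n x - f x| ∧ |f x| ≤ K} ≤ 2 * (T n + 2 * K * d n) / ε := by
    rw [le_div_iff₀ hε]; linarith
  linarith

theorem tendsto_iSup_setLIntegral_of_tendsto_setIntegralDist [IsFiniteMeasure μ]
    (hfs : ∀ n, Measurable (fs n)) (hfsi : ∀ n, Integrable (fs n) (μs n)) (hf : Measurable f)
    (hfi : Integrable f μ) (hconv : TendstoInMeasure μ fs atTop f)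
    (hT : Tendsto (fun n => setIntegralDist (μs n) (fs n) μ f) atTop (𝓝 0)) :
    Tendsto (fun K : ℝ => ⨆ n, ∫⁻ x in {x | K ≤ |fs n x|}, ‖fs n x‖ₑ ∂μs n) atTop (𝓝 0) := by
  refine tendsto_iSup_of_tendsto_prod ?_ fun n => tendsto_setLIntegral_setOf_le_abs (hfs n) (hfsi n)
  have hnear : Tendsto (fun n => μ {x | 1 ≤ |fs n x - f x|}) atTop (𝓝 0) := by
    simpa [Real.dist_eq] using tendstoInMeasure_iff_dist.1 hconv 1 one_pos
  have hfar : Tendsto (fun K : ℝ => μ {x | K - 1 ≤ |f x|}) atTop (𝓝 0) :=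
    (tendsto_measure_setOf_le_abs μ hf).comp (tendsto_atTop_add_const_right _ (-1) tendsto_id)
  have htail : Tendsto (fun p : ℕ × ℝ => μ {x | p.2 ≤ |fs p.1 x|}) (atTop ×ˢ atTop) (𝓝 0) := by
    refine tendsto_of_tendsto_of_tendsto_of_le_of_le tendsto_const_nhds
      (by simpa using (hnear.comp tendsto_fst).add (hfar.comp tendsto_snd)) (fun _ => zero_le)
      fun p => (measure_mono fun x (hx : p.2 ≤ _) => ?_).trans (measure_union_le _ _)
    rcases le_or_gt 1 |fs p.1 x - f x| with h | h
    exacts [Or.inl h,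
      Or.inr (show p.2 ≤ |f x| + 1 by linarith [abs_sub_abs_le_abs_sub (fs p.1 x) (f x)])]
  have hdom := tendsto_setLIntegral_zero (f := fun x => ‖f x‖ₑ) hfi.2.ne htail
  have hT2 : Tendsto (fun p : ℕ × ℝ => ENNReal.ofReal (2 * setIntegralDist (μs p.1) (fs p.1) μ f))
      (atTop ×ˢ atTop) (𝓝 0) := by
    have := (ENNReal.tendsto_ofReal (hT.const_mul 2)).comp (tendsto_fst (g := (atTop : Filter ℝ)))
    rwa [mul_zero, ENNReal.ofReal_zero] at this
  refine tendsto_of_tendsto_of_tendsto_of_le_of_le tendsto_const_nhds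
    (by simpa only [add_zero] using hdom.add hT2)
    (fun _ => zero_le) fun p => ?_
  exact setLIntegral_enorm_le_add (hfs p.1) (hfsi p.1) hfi
    (fun A hA => abs_sub_le_setIntegralDist (hfsi p.1) hfi hA)
    (measurableSet_le measurable_const (hfs p.1).abs)

theorem tendsto_setIntegralDist_of_tendstoInMeasure [∀ n, IsFiniteMeasure (μs n)]
    [IsFiniteMeasure μ] (hfs : ∀ n, Measurable (fs n))
    (hfsi : ∀ n, Integrable (fs n) (μs n)) (hf : Measurable f) (hfi : Integrable f μ)
    (htv : Tendsto (fun n => tvDist (μs n) μ) atTop (𝓝 0))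
    (hconv : TendstoInMeasure μ fs atTop f)
    (htail : Tendsto (fun K : ℝ => ⨆ n, ∫⁻ x in {x | K ≤ |fs n x|}, ‖fs n x‖ₑ ∂μs n) atTop (𝓝 0)) :
    Tendsto (fun n => setIntegralDist (μs n) (fs n) μ f) atTop (𝓝 0) := by
  set d := fun n => (tvDist (μs n) μ).toReal
  have hd : Tendsto d atTop (𝓝 0) :=
    (ENNReal.tendsto_toReal_zero_iff fun n => tvDist_ne_top _ _).2 htv
  have hb : ∀ᶠ K : ℝ in atTop, Tendsto
      (fun n => 2 * K * d n + ∫ x, |clamp K (fs n x) - clamp K (f x)| ∂μ) atTop (𝓝 0) :=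
    (eventually_ge_atTop 0).mono fun K hK => by
      simpa using (hd.const_mul (2 * K)).add (tendsto_integral_abs_clamp_sub_clamp hfs hf hconv hK)
  have hc : Tendsto (fun K : ℝ => (⨆ n, ∫⁻ x in {x | K ≤ |fs n x|}, ‖fs n x‖ₑ ∂μs n).toReal +
      (∫⁻ x in {x | K ≤ |f x|}, ‖f x‖ₑ ∂μ).toReal) atTop (𝓝 0) := by
    have htoReal := ENNReal.tendsto_toReal ENNReal.zero_ne_top
    simpa using (htoReal.comp htail).add (htoReal.comp (tendsto_setLIntegral_setOf_le_abs hf hfi))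
  refine tendsto_zero_of_le_add (fun n => setIntegralDist_nonneg) hb hc ?_
  filter_upwards [eventually_ge_atTop 0, htail.eventually (gt_mem_nhds zero_lt_one)]
    with K hK hfin n
  refine setIntegralDist_le (by positivity) fun A hA => ?_
  have hn : ∫ x, |fs n x - clamp K (fs n x)| ∂μs n ≤
      (⨆ n, ∫⁻ x in {x | K ≤ |fs n x|}, ‖fs n x‖ₑ ∂μs n).toReal :=
    (integral_abs_sub_clamp_le (hfs n) (hfsi n) hK).trans
      (ENNReal.toReal_mono (ne_top_of_lt (hfin.trans ENNReal.one_lt_top)) (le_iSup_of_le n le_rfl))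
  have hf_trunc := integral_abs_sub_clamp_le hf hfi hK
  have := abs_setIntegral_sub_le_of_clamp (hfs n) (hfsi n) hf hfi hK hA
  linarith

theorem tendsto_setIntegralDist_iff [∀ n, IsFiniteMeasure (μs n)] [IsFiniteMeasure μ]
    (hfs : ∀ n, Measurable (fs n)) (hfsi : ∀ n, Integrable (fs n) (μs n)) (hf : Measurable f)
    (hfi : Integrable f μ) (htv : Tendsto (fun n => tvDist (μs n) μ) atTop (𝓝 0)) :
    Tendsto (fun n => setIntegralDist (μs n) (fs n) μ f) atTop (𝓝 0) ↔
      TendstoInMeasure μ fs atTop f ∧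
        Tendsto (fun K : ℝ => ⨆ n, ∫⁻ x in {x | K ≤ |fs n x|}, ‖fs n x‖ₑ ∂μs n) atTop (𝓝 0) := by
  refine ⟨fun hT => ?_, fun ⟨hconv, htail⟩ =>
    tendsto_setIntegralDist_of_tendstoInMeasure hfs hfsi hf hfi htv hconv htail⟩
  have hconv := tendstoInMeasure_of_tendsto_setIntegralDist hfs hfsi hf hfi htv hT
  exact ⟨hconv, tendsto_iSup_setLIntegral_of_tendsto_setIntegralDist hfs hfsi hf hfi hconv hT⟩

end Convergence

section SignedMeasure

theorem totalVariation_withDensityᵥ {g : S → ℝ} (hg : Measurable g) (hgi : Integrable g ν) :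
    SignedMeasure.totalVariation (ν.withDensityᵥ g) = ν.withDensity fun x => ‖g x‖ₑ := by
  rw [SignedMeasure.totalVariation,
    SignedMeasure.toJordanDecomposition_eq_of_eq_add_withDensity hg hgi
      VectorMeasure.MutuallySingular.zero_left (zero_add _).symm]
  simp only [SignedMeasure.toJordanDecomposition_zero, JordanDecomposition.zero_posPart,
    JordanDecomposition.zero_negPart, zero_add]
  rw [← withDensity_add_left hg.ennreal_ofReal]
  congr 1
  funext x
  rcases le_total 0 (g x) with h | h
  · simp [ENNReal.ofReal_eq_zero.2 (neg_nonpos.2 h), Real.enorm_of_nonneg h]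
  · simp [ENNReal.ofReal_eq_zero.2 h, Real.enorm_eq_ofReal_abs, abs_of_nonpos h]

variable {s : SignedMeasure S} [SigmaFinite ν]

theorem apply_eq_setIntegral_rnDeriv (hac : s ≪ᵥ ν.toENNRealVectorMeasure) {A : Set S}
    (hA : MeasurableSet A) : s A = ∫ x in A, s.rnDeriv ν x ∂ν := by
  conv_lhs => rw [← s.withDensityᵥ_rnDeriv_eq ν hac]
  exact withDensityᵥ_apply (s.integrable_rnDeriv ν) hA

theorem totalVariation_apply_eq_setLIntegral_rnDeriv (hac : s ≪ᵥ ν.toENNRealVectorMeasure)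
    {A : Set S} (hA : MeasurableSet A) : s.totalVariation A = ∫⁻ x in A, ‖s.rnDeriv ν x‖ₑ ∂ν := by
  conv_lhs => rw [← s.withDensityᵥ_rnDeriv_eq ν hac]
  rw [totalVariation_withDensityᵥ (s.measurable_rnDeriv ν) (s.integrable_rnDeriv ν),
    withDensity_apply _ hA]

theorem iSup_abs_sub_eq_setIntegralDist {ν' : Measure S} [SigmaFinite ν'] {s' : SignedMeasure S}
    (hac : s ≪ᵥ ν.toENNRealVectorMeasure) (hac' : s' ≪ᵥ ν'.toENNRealVectorMeasure) :
    ⨆ (A : Set S) (_ : MeasurableSet A), |s A - s' A| =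
      setIntegralDist ν (s.rnDeriv ν) ν' (s'.rnDeriv ν') :=
  congrArg iSup <| funext fun A => congrArg iSup <| funext fun hA => by
    rw [apply_eq_setIntegral_rnDeriv hac hA, apply_eq_setIntegral_rnDeriv hac' hA]

end SignedMeasure

end TVConvergence

open TVConvergence in
/-- Criterion for convergence in total variation of signed measures in terms of their
Radon–Nikodym derivatives. -/
theorem uniform_fatou_stmt16 {S : Type*} [MeasurableSpace S]
    (μs : ℕ → Measure S) (μ : Measure S) [∀ n, IsFiniteMeasure (μs n)]
    (htv : Tendsto (fun n => ⨆ (A : Set S) (_ : MeasurableSet A),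
      (μs n A - μ A) + (μ A - μs n A)) atTop (𝓝 0))
    (τs : ℕ → SignedMeasure S) (τ : SignedMeasure S)
    (hac : τ ≪ᵥ μ.toENNRealVectorMeasure)
    (hacs : ∀ n, τs n ≪ᵥ (μs n).toENNRealVectorMeasure) :
    Tendsto (fun n => ⨆ (A : Set S) (_ : MeasurableSet A), |τs n A - τ A|)
        atTop (𝓝 0) ↔
    ((∀ ε : ℝ, 0 < ε →
        Tendsto (fun n =>
          μ {s | ε ≤ |(τs n).rnDeriv (μs n) s - τ.rnDeriv μ s|}) atTop (𝓝 0)) ∧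
      Tendsto (fun K : ℝ => ⨆ n,
          (τs n).totalVariation {s | K ≤ |(τs n).rnDeriv (μs n) s|})
        atTop (𝓝 0)) := by
  change Tendsto (fun n => tvDist (μs n) μ) atTop (𝓝 0) at htv
  have := isFiniteMeasure_of_tendsto_tvDist htv
  have hfs n : Measurable ((τs n).rnDeriv (μs n)) := (τs n).measurable_rnDeriv (μs n)
  have htail : (fun K : ℝ => ⨆ n, (τs n).totalVariation {s | K ≤ |(τs n).rnDeriv (μs n) s|}) =
      fun K => ⨆ n, ∫⁻ x in {s | K ≤ |(τs n).rnDeriv (μs n) s|}, ‖(τs n).rnDeriv (μs n) x‖ₑ ∂μs n :=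
    funext fun K => congrArg iSup <| funext fun n =>
      totalVariation_apply_eq_setLIntegral_rnDeriv (hacs n)
        (measurableSet_le measurable_const (hfs n).abs)
  simp_rw [iSup_abs_sub_eq_setIntegralDist (hacs _) hac]
  rw [htail, tendsto_setIntegralDist_iff hfs (fun n => (τs n).integrable_rnDeriv (μs n))
    (τ.measurable_rnDeriv μ) (τ.integrable_rnDeriv μ) htv, tendstoInMeasure_iff_dist]
  simp only [Real.dist_eq]
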